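/- arXiv:0807.0608 — 2 statements merged into one kernel-verified Lean document; each statement's English description precedes it below -/
import Mathlib

section
/- Every good word w ∈ W can be uniquely represented as w = x_i R_{w_1} R_{w_2} … R_{w_m} = (…((x_i w_1) w_2) … w_m) for some i and some m ≥ 0, where all the words w_j are good and w_1 ≤ w_2 ≤ … ≤ w_m. -/
namespace RS

/-- The degree of a nonassociative word. -/
def deg {X : Type*} : FreeMagma X → ℕ
  | .of _ => 1
  | .mul u v => deg u + deg v

/-- The order on nonassociative words: `u < v` if `d u < d v`; words of equal degree 1 are
compared in `X`; words `u = u₁u₂`, `v = v₁v₂` of equal degree `≥ 2` are compared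
lexicographically. -/
def wlt {X : Type*} [LinearOrder X] : FreeMagma X → FreeMagma X → Prop
  | .of a, .of b => a < b
  | .of _, .mul _ _ => True
  | .mul _ _, .of _ => False
  | .mul u₁ u₂, .mul v₁ v₂ =>
      deg (FreeMagma.mul u₁ u₂) < deg (FreeMagma.mul v₁ v₂) ∨
        (deg (FreeMagma.mul u₁ u₂) = deg (FreeMagma.mul v₁ v₂) ∧
          (wlt u₁ v₁ ∨ (u₁ = v₁ ∧ wlt u₂ v₂)))

/-- `u ≤ v` on nonassociative words. -/
def wle {X : Type*} [LinearOrder X] (u v : FreeMagma X) : Prop := wlt u v ∨ u = v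

/-- A word is good if it contains no subword `(rs)t` with `s > t`. -/
def IsGood {X : Type*} [LinearOrder X] : FreeMagma X → Prop
  | .of _ => True
  | .mul (.of _) v => IsGood v
  | .mul (.mul u₁ u₂) v =>
      IsGood (FreeMagma.mul u₁ u₂) ∧ IsGood v ∧ ¬ wlt v u₂

/-- Evaluation of a nonassociative word at values `x` in a magma `A`. -/
def evalWord {X A : Type*} [Mul A] (x : X → A) : FreeMagma X → A
  | .of a => x a
  | .mul u v => evalWord x u * evalWord x v

/-- Data exhibiting a nonunital nonassociative `k`-algebra `A` as the free right-symmetric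
algebra `RS⟨x_1,…,x_n⟩`: `A` satisfies the right-symmetric identity and the images of the good
words form a `k`-linear basis (Segal's theorem). -/
structure FreeRSData (k : Type*) [Field k] (n : ℕ) (A : Type*)
    [NonUnitalNonAssocRing A] [Module k A] where
  rightSymm : ∀ a b c : A, (a * b) * c - a * (b * c) = (a * c) * b - a * (c * b)
  x : Fin n → A
  basis : Module.Basis {w : FreeMagma (Fin n) // IsGood w} k A
  basis_eq : ∀ w : {w : FreeMagma (Fin n) // IsGood w}, basis w = evalWord x w.1

/-- `w` is the leading word of `f`: it is a good word occurring in the representation of `f`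
in the basis of good words, and every other good word occurring there is smaller. -/
def IsLeadingWord {k : Type*} [Field k] {n : ℕ} {A : Type*} [NonUnitalNonAssocRing A]
    [Module k A] (D : FreeRSData k n A) (f : A) (w : FreeMagma (Fin n)) : Prop :=
  ∃ hw : IsGood w,
    (⟨w, hw⟩ : {u : FreeMagma (Fin n) // IsGood u}) ∈ (D.basis.repr f).support ∧
      ∀ u ∈ (D.basis.repr f).support, u.1 ≠ w → wlt u.1 w

/-- The left-normed word `x R_{w_1} ⋯ R_{w_m} = (…((x w_1) w_2) … w_m)`. -/
def leftNormed {X : Type*} (a : FreeMagma X) (l : List (FreeMagma X)) : FreeMagma X :=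
  l.foldl FreeMagma.mul a

/-- The degree of a word in the variable `a`. -/
def countVar {X : Type*} [DecidableEq X] (a : X) : FreeMagma X → ℕ
  | .of b => if b = a then 1 else 0
  | .mul u v => countVar a u + countVar a v

/-- The two-sided ideal of the nonunital nonassociative `k`-algebra `A` generated by `f`. -/
def idealGen (k : Type*) [Field k] {A : Type*} [NonUnitalNonAssocRing A] [Module k A]
    (f : A) : Submodule k A :=
  sInf {I : Submodule k A | f ∈ I ∧ ∀ a : A, ∀ y ∈ I, a * y ∈ I ∧ y * a ∈ I}

/-- A pair of (nonzero) elements `f, g` is reducible if there is a good word `s` in a single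
variable with `s(f̄) = ḡ` or `s(ḡ) = f̄`. -/
def Reducible {k : Type*} [Field k] {n : ℕ} {A : Type*} [NonUnitalNonAssocRing A]
    [Module k A] (D : FreeRSData k n A) (f g : A) : Prop :=
  ∃ wf wg : FreeMagma (Fin n), IsLeadingWord D f wf ∧ IsLeadingWord D g wg ∧
    ∃ s : FreeMagma Unit, IsGood s ∧
      (evalWord (fun _ => wf) s = wg ∨ evalWord (fun _ => wg) s = wf)

/-- An elementary automorphism: it fixes all generators but one, which is sent to
`α x_i + f` with `α ≠ 0` and `f` in the subalgebra generated by the other generators. -/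
def IsElementary {k : Type*} [Field k] {n : ℕ} {A : Type*} [NonUnitalNonAssocRing A]
    [Module k A] [SMulCommClass k A A] [IsScalarTower k A A]
    (D : FreeRSData k n A) (e : A →ₙₐ[k] A) : Prop :=
  Function.Bijective e ∧ ∃ i : Fin n,
    (∀ j : Fin n, j ≠ i → e (D.x j) = D.x j) ∧
    ∃ (α : k) (f : A), α ≠ 0 ∧
      f ∈ NonUnitalAlgebra.adjoin k (D.x '' {j | j ≠ i}) ∧
      e (D.x i) = α • D.x i + f

def leftNormalForm {X : Type*} : FreeMagma X → X × List (FreeMagma X)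
  | .of i => (i, [])
  | .mul u v => ((leftNormalForm u).1, (leftNormalForm u).2 ++ [v])

section LeftNormed

variable {X : Type*}

lemma leftNormed_append_singleton (a : FreeMagma X) (l : List (FreeMagma X)) (v : FreeMagma X) :
    leftNormed a (l ++ [v]) = .mul (leftNormed a l) v := by
  simp [leftNormed]

lemma leftNormed_leftNormalForm : ∀ w : FreeMagma X,
    leftNormed (.of (leftNormalForm w).1) (leftNormalForm w).2 = w
  | .of _ => rfl
  | .mul u v => by
    rw [leftNormalForm, leftNormed_append_singleton, leftNormed_leftNormalForm u]

lemma leftNormalForm_leftNormed (i : X) (l : List (FreeMagma X)) :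
    leftNormalForm (leftNormed (.of i) l) = (i, l) := by
  induction l using List.reverseRecOn with
  | nil => rfl
  | append_singleton l v ih => simp [leftNormed_append_singleton, leftNormalForm, ih]

lemma leftNormed_of_injective :
    Function.Injective fun p : X × List (FreeMagma X) => leftNormed (.of p.1) p.2 := by
  rintro ⟨i, l⟩ ⟨j, m⟩ h
  rw [← leftNormalForm_leftNormed i l, ← leftNormalForm_leftNormed j m]
  exact congrArg leftNormalForm h

end LeftNormed

section Good

variable {X : Type*} [LinearOrder X]

lemma wlt_trichotomy : ∀ u v : FreeMagma X, wlt u v ∨ u = v ∨ wlt v u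
  | .of a, .of b => by
    rcases lt_trichotomy a b with h | rfl | h
    exacts [Or.inl h, Or.inr (Or.inl rfl), Or.inr (Or.inr h)]
  | .of _, .mul _ _ => Or.inl trivial
  | .mul _ _, .of _ => Or.inr (Or.inr trivial)
  | .mul u₁ u₂, .mul v₁ v₂ => by
    rcases Nat.lt_trichotomy (deg (.mul u₁ u₂)) (deg (.mul v₁ v₂)) with h | h | h
    · exact Or.inl (Or.inl h)
    · rcases wlt_trichotomy u₁ v₁ with h₁ | rfl | h₁
      · exact Or.inl (Or.inr ⟨h, Or.inl h₁⟩)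
      · rcases wlt_trichotomy u₂ v₂ with h₂ | rfl | h₂
        · exact Or.inl (Or.inr ⟨h, Or.inr ⟨rfl, h₂⟩⟩)
        · exact Or.inr (Or.inl rfl)
        · exact Or.inr (Or.inr (Or.inr ⟨h.symm, Or.inr ⟨rfl, h₂⟩⟩))
      · exact Or.inr (Or.inr (Or.inr ⟨h.symm, Or.inl h₁⟩))
    · exact Or.inr (Or.inr (Or.inl h))

lemma wle_of_not_wlt {u v : FreeMagma X} (h : ¬ wlt v u) : wle u v := by
  rcases wlt_trichotomy u v with h' | h' | h'
  exacts [Or.inl h', Or.inr h', absurd h' h]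

lemma IsGood.left {u v : FreeMagma X} (h : IsGood (.mul u v)) : IsGood u := by
  cases u with
  | of _ => trivial
  | mul _ _ => exact h.1

lemma IsGood.right {u v : FreeMagma X} (h : IsGood (.mul u v)) : IsGood v := by
  cases u with
  | of _ => exact h
  | mul _ _ => exact h.2.1

lemma IsGood.forall_mem_leftNormalForm {w : FreeMagma X} (hw : IsGood w) :
    ∀ u ∈ (leftNormalForm w).2, IsGood u := by
  induction w using FreeMagma.rec with
  | of _ => simp [leftNormalForm]
  | mul u v ihu _ =>
    simp only [leftNormalForm, List.mem_append, List.mem_singleton]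
    rintro x (hx | rfl)
    exacts [ihu hw.left x hx, hw.right]

/-- Goodness of the subword `(x_i R_{w_1} ⋯ R_{w_{j-1}}) w_j` is what forces `w_{j-1} ≤ w_j`. -/
lemma IsGood.isChain_leftNormalForm {w : FreeMagma X} (hw : IsGood w) :
    List.IsChain wle (leftNormalForm w).2 := by
  induction w using FreeMagma.rec with
  | of _ => simp [leftNormalForm]
  | mul u v ihu _ =>
    cases u with
    | of _ => simp [leftNormalForm]
    | mul u₁ u₂ =>
      rw [leftNormalForm, List.isChain_append]
      refine ⟨ihu hw.left, List.isChain_singleton v, ?_⟩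
      simp only [leftNormalForm, List.getLast?_concat, Option.mem_some_iff,
        List.head?_cons]
      rintro _ rfl _ rfl
      exact wle_of_not_wlt hw.2.2

end Good

/-- Lemma 2.3: every good word `w` can be uniquely written as
`w = x_i R_{w_1} R_{w_2} ⋯ R_{w_m}` with all `w_j` good and `w_1 ≤ w_2 ≤ … ≤ w_m`. -/
theorem statement2 (n : ℕ) (w : FreeMagma (Fin n)) (hw : IsGood w) :
    ∃! p : Fin n × List (FreeMagma (Fin n)),
      w = leftNormed (.of p.1) p.2 ∧ (∀ u ∈ p.2, IsGood u) ∧ List.Chain' wle p.2 := by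
  refine ⟨leftNormalForm w, ⟨(leftNormed_leftNormalForm w).symm,
    hw.forall_mem_leftNormalForm, hw.isChain_leftNormalForm⟩, ?_⟩
  rintro p ⟨hp, -, -⟩
  exact leftNormed_of_injective (hp.symm.trans (leftNormed_leftNormalForm w).symm)

end RS
end

section
/- If u and v are good words with u < v, then the leading words of the products uv and vu in the free right-symmetric algebra A satisfy overline{uv} < overline{vu}. -/
namespace RS

/-!
For good words `p` and `q`, the leading word `leadMul p q` of `pq` is computed recursively: if
`p = p₁p₂` with `q < p₂`, the right-symmetric identity `(p₁p₂)q = p₁(p₂q) + (p₁q)p₂ - p₁(qp₂)`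
shows that it is `(leadMul p₁ q)p₂`, every other term being smaller; otherwise `pq` is itself
good. This is proved by well-founded induction on `(deg p + deg q, p)`, the order on words being
well-founded because there are finitely many words of each degree. For `u < v` the word `uv` is
good, and `leadMul v u` has first factor `v` or a word of degree larger than `u`, so it exceeds
`uv`.
-/

section WordOrder

variable {X : Type*}

lemma one_le_deg (u : FreeMagma X) : 1 ≤ deg u := by
  induction u using FreeMagma.rec with
  | of a => exact le_rfl
  | mul u v ihu _ => exact ihu.trans (Nat.le_add_right _ _)

lemma finite_setOf_deg_le [Finite X] (d : ℕ) : {w : FreeMagma X | deg w ≤ d}.Finite := by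
  induction d with
  | zero => exact Set.finite_empty.subset fun w h => by have := one_le_deg w; simp_all
  | succ d ih =>
    refine ((Set.finite_range FreeMagma.of).union (ih.image2 FreeMagma.mul ih)).subset ?_
    rintro (a | ⟨u, v⟩) h
    · exact Or.inl ⟨a, rfl⟩
    · have := one_le_deg u; have := one_le_deg v
      simp only [Set.mem_ofPred_eq, deg] at h
      exact Or.inr ⟨u, by simp only [Set.mem_ofPred_eq]; omega, v,
        by simp only [Set.mem_ofPred_eq]; omega, rfl⟩

variable [LinearOrder X]

lemma wlt_of_deg_lt {u v : FreeMagma X} (h : deg u < deg v) : wlt u v := by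
  cases u with
  | of a => cases v with
    | of b => simp only [deg] at h; omega
    | mul v₁ v₂ => trivial
  | mul u₁ u₂ => cases v with
    | of b => have := one_le_deg u₁; have := one_le_deg u₂; simp only [deg] at h; omega
    | mul v₁ v₂ => exact Or.inl h

lemma deg_le_of_wlt {u v : FreeMagma X} (h : wlt u v) : deg u ≤ deg v := by
  cases u with
  | of a => exact one_le_deg v
  | mul u₁ u₂ => cases v with
    | of b => exact h.elim
    | mul v₁ v₂ => rcases h with h | ⟨h, _⟩ <;> omega

lemma wlt_irrefl (u : FreeMagma X) : ¬ wlt u u := by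
  induction u using FreeMagma.rec with
  | of a => exact lt_irrefl a
  | mul u v ihu ihv => rintro (h | ⟨-, h | ⟨-, h⟩⟩) <;> first | omega | contradiction

lemma wlt_trans {u v w : FreeMagma X} (huv : wlt u v) (hvw : wlt v w) : wlt u w := by
  induction u using FreeMagma.rec generalizing v w with
  | of a =>
    cases v <;> cases w
    · exact lt_trans huv hvw
    · trivial
    · exact hvw.elim
    · trivial
  | mul u₁ u₂ ih₁ ih₂ =>
    cases v <;> cases w
    · exact huv.elim
    · exact huv.elim
    · exact hvw.elim
    · rename_i v₁ v₂ w₁ w₂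
      rcases huv with huv | ⟨e₁, huv | ⟨rfl, huv⟩⟩ <;>
        rcases hvw with hvw | ⟨e₂, hvw | ⟨rfl, hvw⟩⟩
      all_goals first
        | exact Or.inl (by omega)
        | exact Or.inr ⟨e₁.trans e₂, Or.inl (ih₁ huv hvw)⟩
        | exact Or.inr ⟨e₁.trans e₂, Or.inl huv⟩
        | exact Or.inr ⟨e₁.trans e₂, Or.inl hvw⟩
        | exact Or.inr ⟨e₁.trans e₂, Or.inr ⟨rfl, ih₂ huv hvw⟩⟩

lemma wlt_asymm {u v : FreeMagma X} (h : wlt u v) : ¬ wlt v u :=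
  fun h' => wlt_irrefl u (wlt_trans h h')

instance : IsStrictOrder (FreeMagma X) wlt where
  irrefl := wlt_irrefl
  trans _ _ _ := wlt_trans

lemma wlt_mul_of_wlt_left {a b c d : FreeMagma X} (hdeg : deg (a.mul b) ≤ deg (c.mul d))
    (h : wlt a c) : wlt (a.mul b) (c.mul d) := by
  rcases hdeg.lt_or_eq with hlt | heq
  · exact Or.inl hlt
  · exact Or.inr ⟨heq, Or.inl h⟩

lemma wlt_mul_of_wlt_right (a : FreeMagma X) {b d : FreeMagma X} (h : wlt b d) :
    wlt (a.mul b) (a.mul d) := by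
  rcases (deg_le_of_wlt h).lt_or_eq with hlt | heq
  · exact Or.inl (by simp only [deg]; omega)
  · exact Or.inr ⟨by simp only [deg]; omega, Or.inr ⟨rfl, h⟩⟩

lemma wlt_wellFounded [Finite X] : WellFounded (wlt : FreeMagma X → FreeMagma X → Prop) := by
  refine ⟨fun w => ?_⟩
  have hwf := Set.wellFoundedOn_iff.mp
    ((finite_setOf_deg_le (X := X) (deg w)).wellFoundedOn (r := wlt))
  refine hwf.induction (C := fun v => deg v ≤ deg w → Acc wlt v) w (fun v ih hv => ?_) le_rfl
  have hz_le : ∀ z, wlt z v → deg z ≤ deg w := fun z hz => (deg_le_of_wlt hz).trans hv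
  exact Acc.intro v fun z hz => ih z ⟨hz, hz_le z hz, hv⟩ (hz_le z hz)

end WordOrder

section LeadingWord

variable {X : Type*} [LinearOrder X]

open scoped Classical in
noncomputable def leadMul : FreeMagma X → FreeMagma X → FreeMagma X
  | .of a, q => (FreeMagma.of a).mul q
  | .mul p₁ p₂, q => if wlt q p₂ then (leadMul p₁ q).mul p₂ else (p₁.mul p₂).mul q

lemma leadMul_of (a : X) (q : FreeMagma X) : leadMul (.of a) q = (FreeMagma.of a).mul q := rfl

lemma leadMul_mul_of_wlt {p₁ p₂ q : FreeMagma X} (h : wlt q p₂) :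
    leadMul (p₁.mul p₂) q = (leadMul p₁ q).mul p₂ := by
  rw [leadMul, if_pos h]

lemma leadMul_mul_of_not_wlt {p₁ p₂ q : FreeMagma X} (h : ¬ wlt q p₂) :
    leadMul (p₁.mul p₂) q = (p₁.mul p₂).mul q := by
  rw [leadMul, if_neg h]

lemma deg_leadMul (p q : FreeMagma X) : deg (leadMul p q) = deg p + deg q := by
  induction p using FreeMagma.rec with
  | of a => rfl
  | mul p₁ p₂ ih₁ _ =>
    by_cases h : wlt q p₂
    · rw [leadMul_mul_of_wlt h]; simp only [deg, ih₁]; omega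
    · rw [leadMul_mul_of_not_wlt h]; rfl

lemma exists_leadMul_eq_mul (p q : FreeMagma X) :
    ∃ c d, leadMul p q = c.mul d ∧ deg c ≤ deg p := by
  cases p with
  | of a => exact ⟨_, _, leadMul_of a q, le_rfl⟩
  | mul p₁ p₂ =>
    by_cases h : wlt q p₂
    · refine ⟨_, _, leadMul_mul_of_wlt h, ?_⟩
      have := deg_le_of_wlt h
      simp only [deg, deg_leadMul]; omega
    · exact ⟨_, _, leadMul_mul_of_not_wlt h, le_rfl⟩

def MulAdmissible : FreeMagma X → FreeMagma X → Prop
  | .of _, _ => True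
  | .mul _ u₂, v => ¬ wlt v u₂

lemma isGood_mul_iff (u v : FreeMagma X) :
    IsGood (u.mul v) ↔ IsGood u ∧ IsGood v ∧ MulAdmissible u v := by
  cases u <;> simp [IsGood, MulAdmissible]

lemma MulAdmissible.leadMul {p q z : FreeMagma X} (hp : MulAdmissible p z) (hz : ¬ wlt z q) :
    MulAdmissible (leadMul p q) z := by
  cases p with
  | of a => exact hz
  | mul p₁ p₂ =>
    by_cases h : wlt q p₂
    · rw [leadMul_mul_of_wlt h]; exact hp
    · rw [leadMul_mul_of_not_wlt h]; exact hz

lemma IsGood.leadMul {p q : FreeMagma X} (hp : IsGood p) (hq : IsGood q) :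
    IsGood (leadMul p q) := by
  induction p using FreeMagma.rec with
  | of a => exact (isGood_mul_iff _ _).mpr ⟨trivial, hq, trivial⟩
  | mul p₁ p₂ ih₁ _ =>
    obtain ⟨hp₁, hp₂, hadm⟩ := (isGood_mul_iff p₁ p₂).mp hp
    by_cases h : wlt q p₂
    · rw [leadMul_mul_of_wlt h, isGood_mul_iff]
      exact ⟨ih₁ hp₁, hp₂, hadm.leadMul (wlt_asymm h)⟩
    · rw [leadMul_mul_of_not_wlt h, isGood_mul_iff]
      exact ⟨hp, hq, h⟩

lemma leadMul_wlt_mul_of_wlt_right (q : FreeMagma X) {w z : FreeMagma X} (h : wlt w z) :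
    wlt (leadMul q w) (q.mul z) := by
  induction q using FreeMagma.rec generalizing z with
  | of a => exact wlt_mul_of_wlt_right _ h
  | mul q₁ q₂ ih₁ _ =>
    by_cases hw : wlt w q₂
    · rw [leadMul_mul_of_wlt hw]
      refine wlt_mul_of_wlt_left ?_ (ih₁ hw)
      have := deg_le_of_wlt h
      simp only [deg, deg_leadMul]; omega
    · rw [leadMul_mul_of_not_wlt hw]
      exact wlt_mul_of_wlt_right _ h

lemma leadMul_wlt_mul_of_wlt_left {w W : FreeMagma X} (z : FreeMagma X) (h : wlt w W) :
    wlt (leadMul w z) (W.mul z) := by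
  have hdeg : deg (leadMul w z) ≤ deg (W.mul z) := by
    have := deg_le_of_wlt h
    simp only [deg, deg_leadMul]; omega
  cases w with
  | of a => exact wlt_mul_of_wlt_left hdeg h
  | mul w₁ w₂ =>
    by_cases hz : wlt z w₂
    · rw [leadMul_mul_of_wlt hz] at hdeg ⊢
      exact wlt_mul_of_wlt_left hdeg (wlt_trans (leadMul_wlt_mul_of_wlt_right w₁ hz) h)
    · rw [leadMul_mul_of_not_wlt hz] at hdeg ⊢
      exact wlt_mul_of_wlt_left hdeg h

lemma leadMul_wlt_leadMul_mul (p₁ : FreeMagma X) {p₂ q z : FreeMagma X}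
    (hz : deg z ≤ deg p₂ + deg q) : wlt (leadMul p₁ z) ((leadMul p₁ q).mul p₂) := by
  obtain ⟨c, d, hcd, hc⟩ := exists_leadMul_eq_mul p₁ z
  have hdeg := deg_leadMul p₁ z
  rw [hcd] at hdeg ⊢
  refine wlt_mul_of_wlt_left ?_ (wlt_of_deg_lt ?_)
  · simp only [deg, deg_leadMul] at hdeg ⊢; omega
  · have := one_le_deg q; rw [deg_leadMul]; omega

lemma leadMul_eq_mul_of_wlt {u v : FreeMagma X} (h : wlt u v) : leadMul u v = u.mul v := by
  cases u with
  | of a => rfl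
  | mul u₁ u₂ =>
    refine leadMul_mul_of_not_wlt fun hv => ?_
    have hdeg := deg_le_of_wlt (wlt_trans h hv)
    have := one_le_deg u₁
    simp only [deg] at hdeg; omega

lemma leadMul_wlt_leadMul_swap {u v : FreeMagma X} (h : wlt u v) :
    wlt (leadMul u v) (leadMul v u) := by
  rw [leadMul_eq_mul_of_wlt h]
  cases v with
  | of b => exact wlt_mul_of_wlt_left (by simp only [deg]; omega) h
  | mul v₁ v₂ =>
    by_cases hu : wlt u v₂
    · rw [leadMul_mul_of_wlt hu]
      refine wlt_mul_of_wlt_left ?_ (wlt_of_deg_lt ?_)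
      · simp only [deg, deg_leadMul]; omega
      · have := one_le_deg v₁; rw [deg_leadMul]; omega
    · rw [leadMul_mul_of_not_wlt hu]
      exact wlt_mul_of_wlt_left (by simp only [deg]; omega) h

end LeadingWord

section FreeRightSymmetric

variable {k : Type*} [Field k] {n : ℕ} {A : Type*} [NonUnitalNonAssocRing A] [Module k A]
  (D : FreeRSData k n A)

def lowSpan (w : FreeMagma (Fin n)) : Submodule k A :=
  Submodule.span k (D.basis '' {z | wlt z.1 w})

lemma evalWord_mem_lowSpan {z w : FreeMagma (Fin n)} (hz : IsGood z) (h : wlt z w) :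
    evalWord D.x z ∈ lowSpan D w := by
  rw [← D.basis_eq ⟨z, hz⟩]
  exact Submodule.subset_span ⟨_, h, rfl⟩

lemma lowSpan_mono {w w' : FreeMagma (Fin n)} (h : wlt w w') : lowSpan D w ≤ lowSpan D w' :=
  Submodule.span_mono (Set.image_mono fun _ hz => wlt_trans hz h)

lemma mem_lowSpan_of_sub_mem {f : A} {w W : FreeMagma (Fin n)} (hw : IsGood w)
    (hf : f - evalWord D.x w ∈ lowSpan D w) (h : wlt w W) : f ∈ lowSpan D W := by
  simpa using add_mem (lowSpan_mono D h hf) (evalWord_mem_lowSpan D hw h)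

lemma mul_mem_of_mem_lowSpan_left [SMulCommClass k A A] {M : Submodule k A} {a g : A}
    {w : FreeMagma (Fin n)} (h : ∀ z, IsGood z → wlt z w → a * evalWord D.x z ∈ M)
    (hg : g ∈ lowSpan D w) : a * g ∈ M := by
  have : lowSpan D w ≤ M.comap (LinearMap.mulLeft k a) := by
    refine Submodule.span_le.mpr ?_
    rintro _ ⟨z, hz, rfl⟩
    simpa [D.basis_eq] using h z.1 z.2 hz
  exact this hg

lemma mul_mem_of_mem_lowSpan_right [IsScalarTower k A A] {M : Submodule k A} {a g : A}
    {w : FreeMagma (Fin n)} (h : ∀ z, IsGood z → wlt z w → evalWord D.x z * a ∈ M)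
    (hg : g ∈ lowSpan D w) : g * a ∈ M := by
  have : lowSpan D w ≤ M.comap (LinearMap.mulRight k a) := by
    refine Submodule.span_le.mpr ?_
    rintro _ ⟨z, hz, rfl⟩
    simpa [D.basis_eq] using h z.1 z.2 hz
  exact this hg

lemma isLeadingWord_of_sub_mem_lowSpan {f : A} {w : FreeMagma (Fin n)} (hw : IsGood w)
    (hf : f - evalWord D.x w ∈ lowSpan D w) : IsLeadingWord D f w := by
  obtain ⟨r, hr, rfl⟩ : ∃ r ∈ lowSpan D w, f = evalWord D.x w + r :=
    ⟨_, hf, (add_sub_cancel _ _).symm⟩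
  have hsupp : ↑(D.basis.repr r).support ⊆
      {z : {u : FreeMagma (Fin n) // IsGood u} | wlt z.1 w} :=
    D.basis.repr_support_subset_of_mem_span _ hr
  have hrepr :
      D.basis.repr (evalWord D.x w + r) = Finsupp.single ⟨w, hw⟩ 1 + D.basis.repr r := by
    rw [← D.basis_eq ⟨w, hw⟩, map_add, D.basis.repr_self]
  have hr0 : D.basis.repr r ⟨w, hw⟩ = 0 :=
    Finsupp.notMem_support_iff.mp fun h => wlt_irrefl w (hsupp h)
  refine ⟨hw, ?_, fun z hz hne => hsupp ?_⟩
  · rw [hrepr, Finsupp.mem_support_iff, Finsupp.add_apply, hr0]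
    simp
  · have hzw : z ≠ ⟨w, hw⟩ := fun h => hne (congrArg Subtype.val h)
    rw [hrepr, Finsupp.mem_support_iff, Finsupp.add_apply, Finsupp.single_eq_of_ne hzw,
      zero_add] at hz
    exact Finsupp.mem_support_iff.mpr hz

def HasLeadingTerm (p q : FreeMagma (Fin n)) : Prop :=
  evalWord D.x p * evalWord D.x q - evalWord D.x (leadMul p q) ∈ lowSpan D (leadMul p q)

lemma hasLeadingTerm_of_leadMul_eq {p q : FreeMagma (Fin n)} (h : leadMul p q = p.mul q) :
    HasLeadingTerm D p q := by
  rw [HasLeadingTerm, h, evalWord, sub_self]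
  exact zero_mem _

variable [SMulCommClass k A A] [IsScalarTower k A A]

lemma hasLeadingTerm_mul_of_wlt {p₁ p₂ q : FreeMagma (Fin n)} (hp : IsGood (p₁.mul p₂))
    (hq : IsGood q) (hqp : wlt q p₂)
    (ih : ∀ p' q', deg p' + deg q' ≤ deg (p₁.mul p₂) + deg q → wlt p' (p₁.mul p₂) →
      IsGood p' → IsGood q' → HasLeadingTerm D p' q') :
    HasLeadingTerm D (p₁.mul p₂) q := by
  obtain ⟨hp₁, hp₂, -⟩ := (isGood_mul_iff p₁ p₂).mp hp
  have hdeg : deg (p₁.mul p₂) = deg p₁ + deg p₂ := rfl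
  have h₁p : wlt p₁ (p₁.mul p₂) := wlt_of_deg_lt (by have := one_le_deg p₂; omega)
  have h₂p : wlt p₂ (p₁.mul p₂) := wlt_of_deg_lt (by have := one_le_deg p₁; omega)
  set P₁ := evalWord D.x p₁
  set P₂ := evalWord D.x p₂
  set Q := evalWord D.x q
  set L := lowSpan D ((leadMul p₁ q).mul p₂)
  have hP₁z : ∀ z, IsGood z → deg z ≤ deg p₂ + deg q → P₁ * evalWord D.x z ∈ L :=
    fun z hz hdz => mem_lowSpan_of_sub_mem D (hp₁.leadMul hz)
      (ih p₁ z (by omega) h₁p hp₁ hz) (leadMul_wlt_leadMul_mul p₁ hdz)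
  have hP₁xy : ∀ x y, IsGood x → IsGood y → deg x + deg y = deg p₂ + deg q →
      HasLeadingTerm D x y → P₁ * (evalWord D.x x * evalWord D.x y) ∈ L := by
    intro x y hx hy hxy hlead
    have hdeg' : deg (leadMul x y) = deg p₂ + deg q := by rw [deg_leadMul, hxy]
    rw [← sub_add_cancel (evalWord D.x x * evalWord D.x y) (evalWord D.x (leadMul x y)),
      mul_add]
    exact add_mem (mul_mem_of_mem_lowSpan_left D
      (fun z hz hzlt => hP₁z z hz (hdeg' ▸ deg_le_of_wlt hzlt)) hlead)
      (hP₁z _ (hx.leadMul hy) hdeg'.le)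
  have hP₂Q := hP₁xy p₂ q hp₂ hq rfl (ih p₂ q (by omega) h₂p hp₂ hq)
  have hQP₂ := hP₁xy q p₂ hq hp₂ (add_comm _ _)
    (ih q p₂ (by omega) (wlt_trans hqp h₂p) hq hp₂)
  have hP₁Q : (P₁ * Q - evalWord D.x (leadMul p₁ q)) * P₂ ∈ L := by
    refine mul_mem_of_mem_lowSpan_right D (fun w hw hwlt => ?_)
      (ih p₁ q (by omega) h₁p hp₁ hq)
    have := deg_le_of_wlt hwlt
    rw [deg_leadMul] at this
    exact mem_lowSpan_of_sub_mem D (hw.leadMul hp₂)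
      (ih w p₂ (by omega) (wlt_trans hwlt (leadMul_wlt_mul_of_wlt_right p₁ hqp)) hw hp₂)
      (leadMul_wlt_mul_of_wlt_left p₂ hwlt)
  have hrs := D.rightSymm P₁ P₂ Q
  rw [HasLeadingTerm, leadMul_mul_of_wlt hqp]
  change P₁ * P₂ * Q - evalWord D.x (leadMul p₁ q) * P₂ ∈ L
  have key : P₁ * P₂ * Q - evalWord D.x (leadMul p₁ q) * P₂ =
      P₁ * (P₂ * Q) + (P₁ * Q - evalWord D.x (leadMul p₁ q)) * P₂ - P₁ * (Q * P₂) := by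
    rw [sub_mul, sub_eq_iff_eq_add.mp hrs]
    abel
  rw [key]
  exact sub_mem (add_mem hP₂Q hP₁Q) hQP₂

theorem hasLeadingTerm {p q : FreeMagma (Fin n)} (hp : IsGood p) (hq : IsGood q) :
    HasLeadingTerm D p q := by
  have hwf : WellFounded (InvImage (Prod.Lex (· < ·) wlt)
      fun pq : FreeMagma (Fin n) × FreeMagma (Fin n) => (deg pq.1 + deg pq.2, pq.1)) :=
    InvImage.wf _ (wellFounded_lt.prod_lex wlt_wellFounded)
  refine hwf.induction (C := fun pq => IsGood pq.1 → IsGood pq.2 → HasLeadingTerm D pq.1 pq.2)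
    (p, q) (fun ⟨p, q⟩ ih hp hq => ?_) hp hq
  cases p with
  | of a => exact hasLeadingTerm_of_leadMul_eq D rfl
  | mul p₁ p₂ =>
    by_cases hqp : wlt q p₂
    · refine hasLeadingTerm_mul_of_wlt D hp hq hqp fun p' q' hdeg hlt => ih (p', q') ?_
      exact Prod.lex_def.mpr (hdeg.lt_or_eq.imp_right fun h => ⟨h, hlt⟩)
    · exact hasLeadingTerm_of_leadMul_eq D (leadMul_mul_of_not_wlt hqp)

end FreeRightSymmetric

/-- Lemma 2.8: if `u` and `v` are good words with `u < v`, then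
`overline{uv} < overline{vu}` in the free right-symmetric algebra. -/
theorem statement7 (k : Type*) [Field k] (n : ℕ) (A : Type*) [NonUnitalNonAssocRing A]
    [Module k A] [SMulCommClass k A A] [IsScalarTower k A A]
    (D : FreeRSData k n A) (u v : FreeMagma (Fin n))
    (hu : IsGood u) (hv : IsGood v) (huv : wlt u v) :
    ∃ a b : FreeMagma (Fin n),
      IsLeadingWord D (evalWord D.x (u.mul v)) a ∧
      IsLeadingWord D (evalWord D.x (v.mul u)) b ∧ wlt a b :=
  ⟨leadMul u v, leadMul v u,
    isLeadingWord_of_sub_mem_lowSpan D (hu.leadMul hv) (hasLeadingTerm D hu hv),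
    isLeadingWord_of_sub_mem_lowSpan D (hv.leadMul hu) (hasLeadingTerm D hv hu),
    leadMul_wlt_leadMul_swap huv⟩

end RS
end
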